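/- Let α > 0 and λ₁ ≥ C_α λ₂ > 0, and consider φ(r) = φ_λ^+(r) = λ₁ r + λ₂(1 − r^α)^{2/α} on (0,1). (i) If α ≥ 2, then φ' is decreasing on (0,1) and there exists r* ∈ [0,1] such that φ'(r) ≥ λ₁/2 for all r ∈ (0, r*) and |φ''(r)| ≥ λ₁/2 for all r ∈ (r*, 1). (ii) If 0 < α ≤ 1, then φ' is increasing on (0,1) and there exists r* ∈ [0,1] such that φ'(r) ≥ λ₁/2 for all r ∈ (r*, 1) and |φ''(r)| ≥ λ₁/2 for all r ∈ (0, r*). (iii) If 1 < α < 2, then, with r₀ = (α−1)^{1/α}, φ' is decreasing on (0, r₀) and increasing on (r₀, 1), and there exist points r₀' and r₀'' with 0 < r₀' < r₀ < r₀'' < 1 and a constant D_α > 0, all depending only on α, such that φ'(r) ≥ D_α λ₁ for all r ∈ (0, r₀') ∪ (r₀'', 1), and inf_{r ∈ [r₀', r₀'']} φ'(r) + inf_{r ∈ [r₀', r₀'']} |φ'''(r)| ≥ D_α λ₁. -/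

import Mathlib

/-!
On `(0, 1)` one has `φ' = λ₁ - 2 λ₂ g` with `g r = r^(α-1) (1 - r^α)^(2/α - 1)` and
`g' r = r^(α-2) (1 - r^α)^(2/α - 2) (α - 1 - r^α)`, so the monotonicity of `φ'` is governed by
the sign of `α - 1 - r^α`. For `α ≥ 2` and for `α ≤ 1` the factor `|α - 1 - r^α|` dominates the
factor `r (1 - r^α)` of `g`, so `g ≤ |g'|`, i.e. `λ₁ ≤ φ' + |φ''|`: wherever the monotone
function `φ'` has dropped below `λ₁/2`, the second derivative is at least `λ₁/2`.
For `1 < α < 2`, `g` increases up to `r₀ = (α-1)^(1/α)`, where it equals `C_α/2`, and decreases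
afterwards. Hence `φ' ≥ λ₁ - C_α λ₂ ≥ 0`, with a gap proportional to `λ₁` away from `r₀`, while
near `r₀` the third derivative `-2 λ₂ g''` stays away from zero because
`g''(r₀) = -α (α-1) (2-α) r₀^(α-3) (2-α)^(2/α-3) < 0`.
-/

open Set

/-- The constant `C_α`. -/
noncomputable def Calpha (α : ℝ) : ℝ :=
  if 1 < α ∧ α < 2 then 2 * (2 - α) ^ (2 / α - 1) * (α - 1) ^ (1 - 1 / α) else 2

/-- The phase `φ_λ⁺(r) = l₁ r + l₂ (1 - r^α)^{2/α}`. -/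
noncomputable def phasePlus (α l₁ l₂ r : ℝ) : ℝ :=
  l₁ * r + l₂ * (1 - r ^ α) ^ (2 / α)

open Filter Topology

noncomputable def phaseG (α r : ℝ) : ℝ := r ^ (α - 1) * (1 - r ^ α) ^ (2 / α - 1)

noncomputable def phaseG' (α r : ℝ) : ℝ :=
  r ^ (α - 2) * (1 - r ^ α) ^ (2 / α - 2) * (α - 1 - r ^ α)

noncomputable def phaseG'' (α r : ℝ) : ℝ :=
  r ^ (α - 3) * (1 - r ^ α) ^ (2 / α - 3) *
    ((α - 2) * (1 - r ^ α) * (α - 1 - r ^ α) + 2 * (α - 1) * r ^ α * (α - 1 - r ^ α)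
      - α * r ^ α * (1 - r ^ α))

lemma AntitoneOn.exists_forall_le_and_forall_lt {f : ℝ → ℝ} {a b : ℝ} (c : ℝ) (hab : a ≤ b)
    (hf : AntitoneOn f (Ioo a b)) :
    ∃ t ∈ Icc a b, (∀ r ∈ Ioo a t, c ≤ f r) ∧ ∀ r ∈ Ioo t b, f r < c := by
  set S := {x ∈ Icc a b | ∀ r ∈ Ioo a x, c ≤ f r}
  have haS : a ∈ S := ⟨left_mem_Icc.2 hab, fun r hr => absurd hr.2 hr.1.not_gt⟩
  have hS : BddAbove S := ⟨b, fun x hx => hx.1.2⟩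
  have hat : a ≤ sSup S := le_csSup hS haS
  refine ⟨sSup S, ⟨hat, csSup_le ⟨a, haS⟩ fun x hx => hx.1.2⟩, fun r hr => ?_, fun r hr => ?_⟩
  · obtain ⟨x, hxS, hrx⟩ := exists_lt_of_lt_csSup ⟨a, haS⟩ hr.2
    exact hxS.2 r ⟨hr.1, hrx⟩
  · by_contra! hfr
    have hrb : r ∈ Ioo a b := ⟨hat.trans_lt hr.1, hr.2⟩
    have hrS : r ∈ S := ⟨Ioo_subset_Icc_self hrb, fun s hs =>
      hfr.trans (hf ⟨hs.1, hs.2.trans hrb.2⟩ hrb hs.2.le)⟩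
    exact (le_csSup hS hrS).not_gt hr.1

lemma MonotoneOn.exists_forall_le_and_forall_lt {f : ℝ → ℝ} {a b : ℝ} (c : ℝ) (hab : a ≤ b)
    (hf : MonotoneOn f (Ioo a b)) :
    ∃ t ∈ Icc a b, (∀ r ∈ Ioo t b, c ≤ f r) ∧ ∀ r ∈ Ioo a t, f r < c := by
  have hf' : AntitoneOn (fun x => f (-x)) (Ioo (-b) (-a)) := fun x hx y hy hxy =>
    hf ⟨by linarith [hy.2], by linarith [hy.1]⟩ ⟨by linarith [hx.2], by linarith [hx.1]⟩
      (neg_le_neg hxy)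
  obtain ⟨t, ht, hle, hlt⟩ := hf'.exists_forall_le_and_forall_lt c (neg_le_neg hab)
  refine ⟨-t, ⟨?_, ?_⟩, fun r hr => ?_, fun r hr => ?_⟩
  · linarith [ht.2]
  · linarith [ht.1]
  · simpa using hle (-r) ⟨neg_lt_neg hr.2, by linarith [hr.1]⟩
  · simpa using hlt (-r) ⟨by linarith [hr.2], neg_lt_neg hr.1⟩

section Derivatives

variable {α r : ℝ}

lemma hasDerivAt_one_sub_rpow (b : ℝ) (hr : 0 < r) (hu : r ^ α < 1) :
    HasDerivAt (fun x : ℝ => (1 - x ^ α) ^ b)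
      (-(α * r ^ (α - 1)) * b * (1 - r ^ α) ^ (b - 1)) r :=
  ((Real.hasDerivAt_rpow_const (Or.inl hr.ne')).const_sub 1).rpow_const
    (Or.inl (sub_pos.2 hu).ne')

lemma hasDerivAt_phasePlus (l₁ l₂ : ℝ) (hα : α ≠ 0) (hr : 0 < r) (hu : r ^ α < 1) :
    HasDerivAt (phasePlus α l₁ l₂) (l₁ - 2 * l₂ * phaseG α r) r := by
  refine (((hasDerivAt_id r).const_mul l₁).add
    ((hasDerivAt_one_sub_rpow (2 / α) hr hu).const_mul l₂)).congr_deriv ?_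
  simp only [phaseG]
  field_simp
  ring

lemma hasDerivAt_phaseG (hα : α ≠ 0) (hr : 0 < r) (hu : r ^ α < 1) :
    HasDerivAt (phaseG α) (phaseG' α r) r := by
  have hu' := sub_pos.2 hu
  refine ((Real.hasDerivAt_rpow_const (p := α - 1) (Or.inl hr.ne')).mul
    (hasDerivAt_one_sub_rpow (2 / α - 1) hr hu)).congr_deriv ?_
  simp only [phaseG', Real.rpow_sub hr, Real.rpow_sub hu', Real.rpow_one, Real.rpow_two]
  field_simp
  ring

lemma hasDerivAt_phaseG' (hα : α ≠ 0) (hr : 0 < r) (hu : r ^ α < 1) :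
    HasDerivAt (phaseG' α) (phaseG'' α r) r := by
  have hu' := sub_pos.2 hu
  refine (((Real.hasDerivAt_rpow_const (p := α - 2) (Or.inl hr.ne')).mul
    (hasDerivAt_one_sub_rpow (2 / α - 2) hr hu)).mul
    ((Real.hasDerivAt_rpow_const (p := α) (Or.inl hr.ne')).const_sub (α - 1))).congr_deriv ?_
  simp only [phaseG'', Pi.mul_apply, Real.rpow_sub hr, Real.rpow_sub hu', Real.rpow_one,
    Real.rpow_ofNat]
  field_simp
  ring

lemma continuousAt_phaseG'' (hr : 0 < r) (hu : r ^ α < 1) : ContinuousAt (phaseG'' α) r := by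
  have hu' := sub_pos.2 hu
  unfold phaseG''
  fun_prop (disch := first | exact Or.inl hr.ne' | exact Or.inl hu'.ne')

variable {l₁ l₂ : ℝ}

lemma deriv_phasePlus (hα : 0 < α) (hr : r ∈ Ioo 0 1) :
    deriv (phasePlus α l₁ l₂) r = l₁ - 2 * l₂ * phaseG α r :=
  (hasDerivAt_phasePlus l₁ l₂ hα.ne' hr.1 (Real.rpow_lt_one hr.1.le hr.2 hα)).deriv

lemma deriv_deriv_phasePlus (hα : 0 < α) (hr : r ∈ Ioo 0 1) :
    deriv (deriv (phasePlus α l₁ l₂)) r = -(2 * l₂) * phaseG' α r := by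
  have h : deriv (phasePlus α l₁ l₂) =ᶠ[𝓝 r] fun s => l₁ - 2 * l₂ * phaseG α s :=
    eventually_of_mem (isOpen_Ioo.mem_nhds hr) fun s hs => deriv_phasePlus hα hs
  rw [h.deriv_eq, ((hasDerivAt_phaseG hα.ne' hr.1
    (Real.rpow_lt_one hr.1.le hr.2 hα)).const_mul (2 * l₂)).const_sub l₁ |>.deriv]
  ring

lemma deriv_deriv_deriv_phasePlus (hα : 0 < α) (hr : r ∈ Ioo 0 1) :
    deriv (deriv (deriv (phasePlus α l₁ l₂))) r = -(2 * l₂) * phaseG'' α r := by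
  have h : deriv (deriv (phasePlus α l₁ l₂)) =ᶠ[𝓝 r] fun s => -(2 * l₂) * phaseG' α s :=
    eventually_of_mem (isOpen_Ioo.mem_nhds hr) fun s hs => deriv_deriv_phasePlus hα hs
  rw [h.deriv_eq]
  exact ((hasDerivAt_phaseG' hα.ne' hr.1 (Real.rpow_lt_one hr.1.le hr.2 hα)).const_mul _).deriv

end Derivatives

section Monotonicity

variable {α r : ℝ}

lemma phaseG_eq_mul (hr : 0 < r) (hu : r ^ α < 1) :
    phaseG α r = r ^ (α - 2) * (1 - r ^ α) ^ (2 / α - 2) * (r * (1 - r ^ α)) := by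
  have hu' := sub_pos.2 hu
  simp only [phaseG, Real.rpow_sub hr, Real.rpow_sub hu', Real.rpow_one, Real.rpow_two]
  field_simp

lemma phaseG_pos (hr : 0 < r) (hu : r ^ α < 1) : 0 < phaseG α r :=
  mul_pos (Real.rpow_pos_of_pos hr _) (Real.rpow_pos_of_pos (sub_pos.2 hu) _)

lemma phaseG'_pos (hr : 0 < r) (hu : r ^ α < 1) (h : r ^ α < α - 1) : 0 < phaseG' α r :=
  mul_pos (mul_pos (Real.rpow_pos_of_pos hr _) (Real.rpow_pos_of_pos (sub_pos.2 hu) _))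
    (by linarith)

lemma phaseG'_neg (hr : 0 < r) (hu : r ^ α < 1) (h : α - 1 < r ^ α) : phaseG' α r < 0 :=
  mul_neg_of_pos_of_neg
    (mul_pos (Real.rpow_pos_of_pos hr _) (Real.rpow_pos_of_pos (sub_pos.2 hu) _)) (by linarith)

lemma phaseG_le_abs_phaseG' (hα : 0 < α) (hα' : α ≤ 1 ∨ 2 ≤ α) (hr : r ∈ Ioo 0 1) :
    phaseG α r ≤ |phaseG' α r| := by
  have hu : r ^ α < 1 := Real.rpow_lt_one hr.1.le hr.2 hα
  have hA : 0 < r ^ (α - 2) * (1 - r ^ α) ^ (2 / α - 2) :=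
    mul_pos (Real.rpow_pos_of_pos hr.1 _) (Real.rpow_pos_of_pos (sub_pos.2 hu) _)
  rw [phaseG_eq_mul hr.1 hu, phaseG', abs_mul, abs_of_pos hA]
  refine mul_le_mul_of_nonneg_left ?_ hA.le
  rcases hα' with hα1 | hα2
  · have : r ≤ r ^ α := by
      simpa using Real.rpow_le_rpow_of_exponent_ge hr.1 hr.2.le hα1
    rw [abs_of_nonpos (by linarith [Real.rpow_pos_of_pos hr.1 α])]
    nlinarith [hr.1, hr.2]
  · rw [abs_of_pos (by linarith)]
    nlinarith [hr.1, hr.2]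

lemma strictMonoOn_phaseG (hα : 0 < α) {s : Set ℝ} (hs : Convex ℝ s) (hs01 : s ⊆ Ioo 0 1)
    (h : ∀ r ∈ interior s, r ^ α < α - 1) : StrictMonoOn (phaseG α) s := by
  refine strictMonoOn_of_deriv_pos hs (fun r hr => ?_) fun r hr => ?_
  · have hr' := hs01 hr
    exact (hasDerivAt_phaseG hα.ne' hr'.1
      (Real.rpow_lt_one hr'.1.le hr'.2 hα)).continuousAt.continuousWithinAt
  · have hr' := hs01 (interior_subset hr)
    have hu := Real.rpow_lt_one hr'.1.le hr'.2 hα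
    rw [(hasDerivAt_phaseG hα.ne' hr'.1 hu).deriv]
    exact phaseG'_pos hr'.1 hu (h r hr)

lemma strictAntiOn_phaseG (hα : 0 < α) {s : Set ℝ} (hs : Convex ℝ s) (hs01 : s ⊆ Ioo 0 1)
    (h : ∀ r ∈ interior s, α - 1 < r ^ α) : StrictAntiOn (phaseG α) s := by
  refine strictAntiOn_of_deriv_neg hs (fun r hr => ?_) fun r hr => ?_
  · have hr' := hs01 hr
    exact (hasDerivAt_phaseG hα.ne' hr'.1
      (Real.rpow_lt_one hr'.1.le hr'.2 hα)).continuousAt.continuousWithinAt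
  · have hr' := hs01 (interior_subset hr)
    have hu := Real.rpow_lt_one hr'.1.le hr'.2 hα
    rw [(hasDerivAt_phaseG hα.ne' hr'.1 hu).deriv]
    exact phaseG'_neg hr'.1 hu (h r hr)

variable {l₁ l₂ : ℝ} {s : Set ℝ}

lemma StrictMonoOn.strictAntiOn_deriv_phasePlus (hg : StrictMonoOn (phaseG α) s) (hα : 0 < α)
    (hl₂ : 0 < l₂) (hs01 : s ⊆ Ioo 0 1) : StrictAntiOn (deriv (phasePlus α l₁ l₂)) s := by
  intro x hx y hy hxy
  rw [deriv_phasePlus hα (hs01 hx), deriv_phasePlus hα (hs01 hy)]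
  nlinarith [hg hx hy hxy]

lemma StrictAntiOn.strictMonoOn_deriv_phasePlus (hg : StrictAntiOn (phaseG α) s) (hα : 0 < α)
    (hl₂ : 0 < l₂) (hs01 : s ⊆ Ioo 0 1) : StrictMonoOn (deriv (phasePlus α l₁ l₂)) s := by
  intro x hx y hy hxy
  rw [deriv_phasePlus hα (hs01 hx), deriv_phasePlus hα (hs01 hy)]
  nlinarith [hg hx hy hxy]

lemma le_deriv_add_abs_deriv_deriv_phasePlus (hα : 0 < α) (hα' : α ≤ 1 ∨ 2 ≤ α) (hl₂ : 0 ≤ l₂)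
    (hr : r ∈ Ioo 0 1) :
    l₁ ≤ deriv (phasePlus α l₁ l₂) r + |deriv (deriv (phasePlus α l₁ l₂)) r| := by
  rw [deriv_phasePlus hα hr, deriv_deriv_phasePlus hα hr, abs_mul, abs_neg,
    abs_of_nonneg (by positivity : 0 ≤ 2 * l₂)]
  nlinarith [phaseG_le_abs_phaseG' hα hα' hr]

end Monotonicity

section Regimes

variable {α l₁ l₂ : ℝ}

theorem phasePlus_properties_of_two_le (hα : 2 ≤ α) (hl₂ : 0 < l₂) :
    StrictAntiOn (deriv (phasePlus α l₁ l₂)) (Ioo 0 1) ∧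
      ∃ rs ∈ Icc (0 : ℝ) 1,
        (∀ r ∈ Ioo 0 rs, l₁ / 2 ≤ deriv (phasePlus α l₁ l₂) r) ∧
        (∀ r ∈ Ioo rs 1, l₁ / 2 ≤ |deriv (deriv (phasePlus α l₁ l₂)) r|) := by
  have hα0 : 0 < α := by linarith
  have hanti : StrictAntiOn (deriv (phasePlus α l₁ l₂)) (Ioo 0 1) :=
    (strictMonoOn_phaseG hα0 (convex_Ioo 0 1) subset_rfl fun r hr => by
      rw [interior_Ioo] at hr
      linarith [Real.rpow_lt_one hr.1.le hr.2 hα0]).strictAntiOn_deriv_phasePlus hα0 hl₂ subset_rfl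
  obtain ⟨rs, hrs, hlarge, hsmall⟩ :=
    hanti.antitoneOn.exists_forall_le_and_forall_lt (l₁ / 2) zero_le_one
  refine ⟨hanti, rs, hrs, hlarge, fun r hr => ?_⟩
  have hr01 : r ∈ Ioo 0 1 := ⟨hrs.1.trans_lt hr.1, hr.2⟩
  linarith [hsmall r hr,
    le_deriv_add_abs_deriv_deriv_phasePlus (l₁ := l₁) hα0 (.inr hα) hl₂.le hr01]

theorem phasePlus_properties_of_le_one (hα0 : 0 < α) (hα : α ≤ 1) (hl₂ : 0 < l₂) :
    StrictMonoOn (deriv (phasePlus α l₁ l₂)) (Ioo 0 1) ∧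
      ∃ rs ∈ Icc (0 : ℝ) 1,
        (∀ r ∈ Ioo rs 1, l₁ / 2 ≤ deriv (phasePlus α l₁ l₂) r) ∧
        (∀ r ∈ Ioo 0 rs, l₁ / 2 ≤ |deriv (deriv (phasePlus α l₁ l₂)) r|) := by
  have hmono : StrictMonoOn (deriv (phasePlus α l₁ l₂)) (Ioo 0 1) :=
    (strictAntiOn_phaseG hα0 (convex_Ioo 0 1) subset_rfl fun r hr => by
      rw [interior_Ioo] at hr
      linarith [Real.rpow_pos_of_pos hr.1 α]).strictMonoOn_deriv_phasePlus hα0 hl₂ subset_rfl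
  obtain ⟨rs, hrs, hlarge, hsmall⟩ :=
    hmono.monotoneOn.exists_forall_le_and_forall_lt (l₁ / 2) zero_le_one
  refine ⟨hmono, rs, hrs, hlarge, fun r hr => ?_⟩
  have hr01 : r ∈ Ioo 0 1 := ⟨hr.1, hr.2.trans_le hrs.2⟩
  linarith [hsmall r hr,
    le_deriv_add_abs_deriv_deriv_phasePlus (l₁ := l₁) hα0 (.inl hα) hl₂.le hr01]

end Regimes

section CriticalRadius

variable {α r₀ : ℝ}

lemma lt_one_of_rpow_eq_sub_one (hα : 0 < α) (h2 : α < 2) (h₀ : r₀ ^ α = α - 1) : r₀ < 1 := by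
  by_contra! h
  linarith [Real.one_le_rpow h hα.le]

lemma strictMonoOn_phaseG_Ioc (hα : 0 < α) (hr₀1 : r₀ < 1) (h₀ : r₀ ^ α = α - 1) :
    StrictMonoOn (phaseG α) (Ioc 0 r₀) :=
  strictMonoOn_phaseG hα (convex_Ioc 0 r₀) (fun _ hr => ⟨hr.1, hr.2.trans_lt hr₀1⟩)
    fun r hr => by
      rw [interior_Ioc] at hr
      exact h₀ ▸ Real.rpow_lt_rpow hr.1.le hr.2 hα

lemma strictAntiOn_phaseG_Ico (hα : 0 < α) (hr₀ : 0 < r₀) (h₀ : r₀ ^ α = α - 1) :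
    StrictAntiOn (phaseG α) (Ico r₀ 1) :=
  strictAntiOn_phaseG hα (convex_Ico r₀ 1) (fun _ hr => ⟨hr₀.trans_le hr.1, hr.2⟩)
    fun r hr => by
      rw [interior_Ico] at hr
      exact h₀ ▸ Real.rpow_lt_rpow hr₀.le hr.1 hα

lemma phaseG_le_of_rpow_eq_sub_one (hα : 0 < α) (hr₀ : 0 < r₀) (hr₀1 : r₀ < 1)
    (h₀ : r₀ ^ α = α - 1) {r : ℝ} (hr : r ∈ Ioo 0 1) : phaseG α r ≤ phaseG α r₀ := by
  rcases le_total r r₀ with h | h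
  · exact (strictMonoOn_phaseG_Ioc hα hr₀1 h₀).monotoneOn ⟨hr.1, h⟩ ⟨hr₀, le_rfl⟩ h
  · exact (strictAntiOn_phaseG_Ico hα hr₀ h₀).antitoneOn ⟨le_rfl, hr₀1⟩ ⟨h, hr.2⟩ h

lemma phaseG_le_max_of_mem_union (hα : 0 < α) (h₀ : r₀ ^ α = α - 1) {a b r : ℝ} (ha : 0 < a)
    (har₀ : a < r₀) (hr₀b : r₀ < b) (hb : b < 1) (hr : r ∈ Ioo 0 a ∪ Ioo b 1) :
    r ∈ Ioo 0 1 ∧ phaseG α r ≤ max (phaseG α a) (phaseG α b) := by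
  rcases hr with hr | hr
  · exact ⟨⟨hr.1, by linarith [hr.2]⟩, le_max_of_le_left
      ((strictMonoOn_phaseG_Ioc hα (hr₀b.trans hb) h₀).monotoneOn ⟨hr.1, by linarith [hr.2]⟩
        ⟨ha, har₀.le⟩ hr.2.le)⟩
  · exact ⟨⟨by linarith [hr.1], hr.2⟩, le_max_of_le_right
      ((strictAntiOn_phaseG_Ico hα (ha.trans har₀) h₀).antitoneOn ⟨hr₀b.le, hb⟩
        ⟨by linarith [hr.1], hr.2⟩ hr.1.le)⟩

lemma phaseG_of_rpow_eq_sub_one (h1 : 1 < α) (h2 : α < 2) (hr₀ : 0 < r₀)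
    (h₀ : r₀ ^ α = α - 1) : phaseG α r₀ = Calpha α / 2 := by
  have hexp : (α - 1) ^ (1 - 1 / α) = r₀ ^ (α - 1) := by
    conv_lhs => rw [← h₀]
    rw [← Real.rpow_mul hr₀.le]
    congr 1
    field_simp
  rw [phaseG, Calpha, if_pos ⟨h1, h2⟩, h₀, hexp, show (1 : ℝ) - (α - 1) = 2 - α by ring]
  ring

lemma phaseG''_neg_of_rpow_eq_sub_one (h1 : 1 < α) (h2 : α < 2) (hr₀ : 0 < r₀)
    (h₀ : r₀ ^ α = α - 1) : phaseG'' α r₀ < 0 := by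
  rw [phaseG'', h₀]
  refine mul_neg_of_pos_of_neg
    (mul_pos (Real.rpow_pos_of_pos hr₀ _) (Real.rpow_pos_of_pos (by linarith) _)) ?_
  nlinarith [mul_pos (mul_pos (by linarith : (0 : ℝ) < α) (sub_pos.2 h1)) (sub_pos.2 h2)]

lemma exists_Icc_forall_phaseG''_lt (h1 : 1 < α) (h2 : α < 2) (hr₀ : 0 < r₀)
    (h₀ : r₀ ^ α = α - 1) :
    ∃ ε > 0, ∀ r ∈ Icc (r₀ - ε) (r₀ + ε), r ∈ Ioo 0 1 ∧ phaseG'' α r < phaseG'' α r₀ / 2 := by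
  have hr₀1 := lt_one_of_rpow_eq_sub_one (by linarith) h2 h₀
  have hnhds : Ioo 0 1 ∩ {r | phaseG'' α r < phaseG'' α r₀ / 2} ∈ 𝓝 r₀ :=
    inter_mem (isOpen_Ioo.mem_nhds ⟨hr₀, hr₀1⟩)
      ((continuousAt_phaseG'' hr₀ (by linarith)).eventually_lt continuousAt_const
        (by linarith [phaseG''_neg_of_rpow_eq_sub_one h1 h2 hr₀ h₀]))
  exact (nhds_basis_Icc_pos r₀).mem_iff.1 hnhds

end CriticalRadius

section Window

variable {α C l₁ l₂ : ℝ}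

lemma one_sub_div_mul_le_deriv_phasePlus {M r : ℝ} (hα : 0 < α) (hC : 0 < C)
    (hl₂ : 0 ≤ l₂) (hl : C * l₂ ≤ l₁) (hM : 0 ≤ M) (hr : r ∈ Ioo 0 1) (hg : phaseG α r ≤ M) :
    (1 - 2 * M / C) * l₁ ≤ deriv (phasePlus α l₁ l₂) r := by
  have hl₂' : l₂ ≤ l₁ / C := by rw [le_div_iff₀ hC]; linarith
  rw [deriv_phasePlus hα hr]
  calc (1 - 2 * M / C) * l₁ = l₁ - 2 * M * (l₁ / C) := by ring
    _ ≤ l₁ - 2 * M * l₂ := by gcongr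
    _ ≤ l₁ - 2 * l₂ * phaseG α r := by nlinarith

lemma div_mul_le_sInf_deriv_add_sInf_abs_deriv3_phasePlus {δ : ℝ} {s : Set ℝ} (hα : 0 < α)
    (hC : 0 < C) (hδC : δ ≤ C) (hl₂ : 0 ≤ l₂) (hl : C * l₂ ≤ l₁) (hs : s.Nonempty)
    (hs01 : s ⊆ Ioo 0 1) (hg : ∀ r ∈ s, phaseG α r ≤ C / 2)
    (hg'' : ∀ r ∈ s, δ ≤ 2 * |phaseG'' α r|) :
    δ / C * l₁ ≤ sInf (deriv (phasePlus α l₁ l₂) '' s) +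
      sInf ((fun r => |deriv (deriv (deriv (phasePlus α l₁ l₂))) r|) '' s) := by
  have hderiv : l₁ - C * l₂ ≤ sInf (deriv (phasePlus α l₁ l₂) '' s) :=
    le_csInf (hs.image _) <| forall_mem_image.2 fun r hr => by
      rw [deriv_phasePlus hα (hs01 hr)]
      nlinarith [hg r hr]
  have hderiv3 : δ * l₂ ≤ sInf ((fun r => |deriv (deriv (deriv (phasePlus α l₁ l₂))) r|) '' s) :=
    le_csInf (hs.image _) <| forall_mem_image.2 fun r hr => by
      rw [deriv_deriv_deriv_phasePlus hα (hs01 hr), abs_mul, abs_neg, abs_of_nonneg (by linarith)]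
      nlinarith [hg'' r hr]
  calc δ / C * l₁ = l₁ - C * l₂ + δ * l₂ - (1 - δ / C) * (l₁ - C * l₂) := by
        field_simp
        ring
    _ ≤ l₁ - C * l₂ + δ * l₂ := by
        have : δ / C ≤ 1 := (div_le_one hC).2 hδC
        nlinarith
    _ ≤ _ := add_le_add hderiv hderiv3

end Window

theorem phasePlus_properties_of_one_lt_of_lt_two {α r₀ : ℝ} (h1 : 1 < α) (h2 : α < 2)
    (hr₀ : 0 < r₀) (h₀ : r₀ ^ α = α - 1) :
    ∃ r₀' r₀'' D : ℝ, 0 < r₀' ∧ r₀' < r₀ ∧ r₀ < r₀'' ∧ r₀'' < 1 ∧ 0 < D ∧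
      ∀ l₁ l₂ : ℝ, 0 < l₂ → Calpha α * l₂ ≤ l₁ →
        StrictAntiOn (deriv (phasePlus α l₁ l₂)) (Ioo 0 r₀) ∧
        StrictMonoOn (deriv (phasePlus α l₁ l₂)) (Ioo r₀ 1) ∧
        (∀ r ∈ Ioo 0 r₀' ∪ Ioo r₀'' 1, D * l₁ ≤ deriv (phasePlus α l₁ l₂) r) ∧
        D * l₁ ≤ sInf (deriv (phasePlus α l₁ l₂) '' Icc r₀' r₀'') +
          sInf ((fun r => |deriv (deriv (deriv (phasePlus α l₁ l₂))) r|) '' Icc r₀' r₀'') := by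
  have hα : 0 < α := by linarith
  have hr₀1 := lt_one_of_rpow_eq_sub_one hα h2 h₀
  have hmono := strictMonoOn_phaseG_Ioc hα hr₀1 h₀
  have hanti := strictAntiOn_phaseG_Ico hα hr₀ h₀
  have hg₀ := phaseG_of_rpow_eq_sub_one h1 h2 hr₀ h₀
  have hg''₀ := phaseG''_neg_of_rpow_eq_sub_one h1 h2 hr₀ h₀
  have hC : 0 < Calpha α := by linarith [phaseG_pos hr₀ (h₀ ▸ (by linarith) : r₀ ^ α < 1)]
  obtain ⟨ε, hε, hIcc⟩ := exists_Icc_forall_phaseG''_lt h1 h2 hr₀ h₀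
  have hr₀' : 0 < r₀ - ε := (hIcc _ ⟨le_rfl, by linarith⟩).1.1
  have hr₀'' : r₀ + ε < 1 := (hIcc _ ⟨by linarith, le_rfl⟩).1.2
  set M := max (phaseG α (r₀ - ε)) (phaseG α (r₀ + ε))
  have hM : M < Calpha α / 2 := hg₀ ▸ max_lt
    (hmono ⟨hr₀', by linarith⟩ ⟨hr₀, le_rfl⟩ (by linarith))
    (hanti ⟨le_rfl, hr₀1⟩ ⟨by linarith, hr₀''⟩ (by linarith))
  have hM0 : 0 ≤ M :=
    le_max_of_le_left (phaseG_pos hr₀' (Real.rpow_lt_one hr₀'.le (by linarith) hα)).le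
  set δ := min (-phaseG'' α r₀) (Calpha α)
  refine ⟨r₀ - ε, r₀ + ε, min (1 - 2 * M / Calpha α) (δ / Calpha α), hr₀', by linarith,
    by linarith, hr₀'', lt_min ?_ (div_pos (lt_min (by linarith) hC) hC),
    fun l₁ l₂ hl₂ hl => ⟨?_, ?_, fun r hr => ?_, ?_⟩⟩
  · rw [sub_pos, div_lt_one hC]
    linarith
  · exact (hmono.mono Ioo_subset_Ioc_self).strictAntiOn_deriv_phasePlus hα hl₂
      fun r hr => ⟨hr.1, hr.2.trans hr₀1⟩
  · exact (hanti.mono Ioo_subset_Ico_self).strictMonoOn_deriv_phasePlus hα hl₂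
      fun r hr => ⟨hr₀.trans hr.1, hr.2⟩
  · obtain ⟨hr01, hgr⟩ :=
      phaseG_le_max_of_mem_union hα h₀ hr₀' (by linarith) (by linarith) hr₀'' hr
    exact (mul_le_mul_of_nonneg_right (min_le_left _ _) (by linarith [mul_pos hC hl₂])).trans
      (one_sub_div_mul_le_deriv_phasePlus hα hC hl₂.le hl hM0 hr01 hgr)
  · refine (mul_le_mul_of_nonneg_right (min_le_right _ _) (by linarith [mul_pos hC hl₂])).trans
      (div_mul_le_sInf_deriv_add_sInf_abs_deriv3_phasePlus hα hC (min_le_right _ _) hl₂.le hl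
        ⟨r₀, by linarith, by linarith⟩ (fun r hr => (hIcc r hr).1)
        (fun r hr => hg₀ ▸ phaseG_le_of_rpow_eq_sub_one hα hr₀ hr₀1 h₀ (hIcc r hr).1)
        fun r hr => ?_)
    rw [abs_of_neg (by linarith [(hIcc r hr).2])]
    linarith [(hIcc r hr).2, min_le_left (-phaseG'' α r₀) (Calpha α)]

theorem phasePlus_properties (α : ℝ) (hα : 0 < α) :
    (∀ l₁ l₂ : ℝ, 0 < l₂ → Calpha α * l₂ ≤ l₁ → 2 ≤ α →
      StrictAntiOn (deriv (phasePlus α l₁ l₂)) (Ioo 0 1) ∧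
      ∃ rs ∈ Icc (0 : ℝ) 1,
        (∀ r ∈ Ioo 0 rs, l₁ / 2 ≤ deriv (phasePlus α l₁ l₂) r) ∧
        (∀ r ∈ Ioo rs 1, l₁ / 2 ≤ |deriv (deriv (phasePlus α l₁ l₂)) r|)) ∧
    (∀ l₁ l₂ : ℝ, 0 < l₂ → Calpha α * l₂ ≤ l₁ → α ≤ 1 →
      StrictMonoOn (deriv (phasePlus α l₁ l₂)) (Ioo 0 1) ∧
      ∃ rs ∈ Icc (0 : ℝ) 1,
        (∀ r ∈ Ioo rs 1, l₁ / 2 ≤ deriv (phasePlus α l₁ l₂) r) ∧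
        (∀ r ∈ Ioo 0 rs, l₁ / 2 ≤ |deriv (deriv (phasePlus α l₁ l₂)) r|)) ∧
    (1 < α → α < 2 →
      ∃ r₀' r₀'' D : ℝ, 0 < r₀' ∧ r₀' < (α - 1) ^ (1 / α) ∧
        (α - 1) ^ (1 / α) < r₀'' ∧ r₀'' < 1 ∧ 0 < D ∧
        ∀ l₁ l₂ : ℝ, 0 < l₂ → Calpha α * l₂ ≤ l₁ →
          StrictAntiOn (deriv (phasePlus α l₁ l₂)) (Ioo 0 ((α - 1) ^ (1 / α))) ∧
          StrictMonoOn (deriv (phasePlus α l₁ l₂)) (Ioo ((α - 1) ^ (1 / α)) 1) ∧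
          (∀ r ∈ Ioo 0 r₀' ∪ Ioo r₀'' 1, D * l₁ ≤ deriv (phasePlus α l₁ l₂) r) ∧
          D * l₁ ≤ sInf (deriv (phasePlus α l₁ l₂) '' Icc r₀' r₀'') +
            sInf ((fun r => |deriv (deriv (deriv (phasePlus α l₁ l₂))) r|) '' Icc r₀' r₀'')) := by
  refine ⟨fun l₁ l₂ hl₂ _ hα2 => phasePlus_properties_of_two_le hα2 hl₂,
    fun l₁ l₂ hl₂ _ hα1 => phasePlus_properties_of_le_one hα hα1 hl₂,
    fun h1 h2 => phasePlus_properties_of_one_lt_of_lt_two h1 h2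
      (Real.rpow_pos_of_pos (by linarith) _) ?_⟩
  rw [← Real.rpow_mul (by linarith), one_div_mul_cancel hα.ne', Real.rpow_one]
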